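/- Let Q be strictly convex, even, nonnegative, and ε > 0. If φ is a non-negative bounded measurable function on an interval J with W(φ,J) < Q(ε), then either 𝒞(φ,J) ≥ ε or V_ε(φ,J) ≤ Q(ε). -/

import Mathlib

open MeasureTheory Set Filter Topology
open scoped ENNReal

noncomputable section

/-- Lebesgue average of a (nonnegative-valued, via `ENNReal.ofReal`) function over `J`. -/
def avg (J : Set ℝ) (f : ℝ → ℝ) : ℝ≥0∞ :=
  (volume J)⁻¹ * ∫⁻ x in J, ENNReal.ofReal (f x)

/-- `V_c(φ, J) = ⟨Q(φ - c)⟩_J`. -/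
def Vc (Q φ : ℝ → ℝ) (J : Set ℝ) (c : ℝ) : ℝ≥0∞ :=
  avg J (fun x => Q (φ x - c))

/-- `V(φ, J) = inf_c V_c(φ, J)`. -/
def V (Q φ : ℝ → ℝ) (J : Set ℝ) : ℝ≥0∞ :=
  ⨅ c : ℝ, Vc Q φ J c

/-- `W(φ, J) = sup { V(φ, L) : L ⊆ J an interval }`. -/
def W (Q φ : ℝ → ℝ) (J : Set ℝ) : ℝ≥0∞ :=
  ⨆ (a : ℝ) (b : ℝ) (_ : Icc a b ⊆ J), V Q φ (Icc a b)

/-- Decreasing rearrangement of `f : [0,1] → ℝ`: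
`f*(t) = inf {λ : |{s ∈ [0,1] : f(s) > λ}| ≤ t}`. -/
def decRe (f : ℝ → ℝ) (t : ℝ) : ℝ :=
  sInf {l : ℝ | volume {s ∈ Icc (0:ℝ) 1 | l < f s} ≤ ENNReal.ofReal t}

/-- `𝒞(φ, J)`: the minimizer of `c ↦ V_c(φ, J)` (when it exists). -/
def CC (Q φ : ℝ → ℝ) (J : Set ℝ) : ℝ :=
  Classical.epsilon (fun c => ∀ c', Vc Q φ J c ≤ Vc Q φ J c')

/-- `α`-concatenation of `φ₋ : [a₋,b₋] → ℝ` and `φ₊ : [a₊,b₊] → ℝ`, as a function on `[0,1]`. -/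
def concat (φm φp : ℝ → ℝ) (am bm ap bp α : ℝ) : ℝ → ℝ :=
  fun s => if s < α then φm (am + (bm - am) * (s / α))
           else φp (ap + (bp - ap) * ((s - α) / (1 - α)))

/-!
Suppose `CC Q φ J < ε` and `V_ε(φ, J) > Q ε`, and put `s = Q'₋(φ - ε)` (left derivative) and
`d = Q(φ - ε) - Q ε`. Minimality of `CC` and the subgradient inequality give `∫_J s ≤ 0`, while
`∫_J d > 0`; and `d > 0` forces `φ - ε > ε`, hence `s > 0`. A rising-sun argument on the running
minimum of `S = ∫ s` yields a subinterval `L` with `∫_L s = 0` and `∫_L d ≥ 0`: across each gap of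
the running-minimum set `S` comes back to its level, and on the set itself `s ≤ 0` a.e. by
Lebesgue differentiation, so `d ≤ 0` there. Finally `∫_L s = 0` makes `ε` a minimizer of
`c ↦ V_c(φ, L)`, so `V(φ, L) = V_ε(φ, L) ≥ Q ε`, contradicting `W(φ, J) < Q ε`.
-/

open Function

lemma MeasureTheory.LocallyIntegrable.intervalIntegrable {f : ℝ → ℝ}
    (hf : LocallyIntegrable f volume) (a b : ℝ) : IntervalIntegrable f volume a b :=
  intervalIntegrable_iff.2 <| (hf.integrableOn_isCompact isCompact_uIcc).mono_set uIoc_subset_uIcc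

lemma locallyIntegrable_of_abs_le {f : ℝ → ℝ} (hf : Measurable f) {B : ℝ}
    (hB : ∀ x, |f x| ≤ B) : LocallyIntegrable f volume :=
  (locallyIntegrable_const B).mono hf.aestronglyMeasurable
    (ae_of_all _ fun x => by simpa [Real.norm_eq_abs] using (hB x).trans (le_abs_self B))

section Gaps

variable {K : Set ℝ} {u v : ℝ}

def gapsIn (K : Set ℝ) (u v : ℝ) : Set (ℝ × ℝ) :=
  {p | p.1 ∈ K ∧ p.2 ∈ K ∧ u ≤ p.1 ∧ p.1 < p.2 ∧ p.2 ≤ v ∧ Ioo p.1 p.2 ∩ K = ∅}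

lemma pairwise_disjoint_gapsIn :
    Pairwise (Disjoint on fun p : gapsIn K u v => Ioo p.1.1 p.1.2) := by
  have hends : ∀ p ∈ gapsIn K u v, ∀ q ∈ gapsIn K u v, ∀ w ∈ Ioo p.1 p.2, w ∈ Ioo q.1 q.2 →
      q.1 ≤ p.1 ∧ p.2 ≤ q.2 := by
    intro p hp q hq w hwp hwq
    constructor
    · by_contra! h
      exact (hp.2.2.2.2.2 ▸ ⟨⟨h, hwq.1.trans hwp.2⟩, hq.1⟩ : q.1 ∈ (∅ : Set ℝ))
    · by_contra! h
      exact (hp.2.2.2.2.2 ▸ ⟨⟨hwp.1.trans hwq.2, h⟩, hq.2.1⟩ : q.2 ∈ (∅ : Set ℝ))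
  rintro ⟨p, hp⟩ ⟨q, hq⟩ hpq
  refine Set.disjoint_left.2 fun w hwp hwq => hpq ?_
  obtain ⟨h₁, h₂⟩ := hends p hp q hq w hwp hwq
  obtain ⟨h₃, h₄⟩ := hends q hq p hp w hwq hwp
  exact Subtype.ext (Prod.ext (le_antisymm h₃ h₁) (le_antisymm h₂ h₄))

lemma iUnion_gapsIn (hK : IsClosed K) (hu : u ∈ K) (hv : v ∈ K) :
    ⋃ p : gapsIn K u v, Ioo p.1.1 p.1.2 = Ioo u v \ K := by
  ext t
  simp only [mem_iUnion, Subtype.exists, exists_prop]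
  constructor
  · rintro ⟨p, hp, ht⟩
    refine ⟨⟨hp.2.2.1.trans_lt ht.1, ht.2.trans_le hp.2.2.2.2.1⟩, fun htK => ?_⟩
    exact (hp.2.2.2.2.2 ▸ ⟨ht, htK⟩ : t ∈ (∅ : Set ℝ))
  · rintro ⟨ht, htK⟩
    have hl : sSup (K ∩ Icc u t) ∈ K ∩ Icc u t :=
      (isCompact_Icc.inter_left hK).sSup_mem ⟨u, hu, le_rfl, ht.1.le⟩
    have hr : sInf (K ∩ Icc t v) ∈ K ∩ Icc t v :=
      (isCompact_Icc.inter_left hK).sInf_mem ⟨v, hv, ht.2.le, le_rfl⟩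
    have hlt : sSup (K ∩ Icc u t) < t := hl.2.2.lt_of_ne fun h => htK (h ▸ hl.1)
    have htr : t < sInf (K ∩ Icc t v) := hr.2.1.lt_of_ne' fun h => htK (h ▸ hr.1)
    refine ⟨(sSup (K ∩ Icc u t), sInf (K ∩ Icc t v)),
      ⟨hl.1, hr.1, hl.2.1, hlt.trans htr, hr.2.2, ?_⟩, hlt, htr⟩
    refine eq_empty_of_forall_notMem fun w ⟨hw, hwK⟩ => ?_
    rcases le_total w t with hwt | htw
    · exact (le_csSup (bddAbove_Icc.mono inter_subset_right)
        ⟨hwK, hl.2.1.trans hw.1.le, hwt⟩).not_gt hw.1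
    · exact (csInf_le (bddBelow_Icc.mono inter_subset_right)
        ⟨hwK, htw, hw.2.le.trans hr.2.2⟩).not_gt hw.2

lemma setIntegral_Ioo_sdiff_nonpos_of_gaps (hK : IsClosed K) (hu : u ∈ K) (hv : v ∈ K)
    {f : ℝ → ℝ} (hf : IntegrableOn f (Ioo u v))
    (hgap : ∀ p ∈ gapsIn K u v, ∫ t in Ioo p.1 p.2, f t ≤ 0) :
    ∫ t in Ioo u v \ K, f t ≤ 0 := by
  have : Countable (gapsIn K u v) := Pairwise.countable_of_isOpen_disjoint
    pairwise_disjoint_gapsIn (fun _ => isOpen_Ioo) fun p => nonempty_Ioo.2 p.2.2.2.2.1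
  rw [← iUnion_gapsIn hK hu hv, integral_iUnion (fun _ => measurableSet_Ioo)
    pairwise_disjoint_gapsIn (by rw [iUnion_gapsIn hK hu hv]; exact hf.mono_set sdiff_subset)]
  exact tsum_nonpos fun p => hgap p.1 p.2

end Gaps

section RunningMin

variable {S : ℝ → ℝ} {a b : ℝ}

def runningMinSet (S : ℝ → ℝ) (a b : ℝ) : Set ℝ :=
  {x ∈ Icc a b | ∀ w ∈ Icc a x, S x ≤ S w}

lemma isClosed_runningMinSet (hS : Continuous S) : IsClosed (runningMinSet S a b) := by
  have : runningMinSet S a b = Icc a b ∩ ⋂ w ∈ Ici a, (Iic w ∪ {x | S x ≤ S w}) := by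
    ext x
    simp only [runningMinSet, mem_ofPred_eq, mem_inter_iff, mem_iInter, mem_Icc, mem_Ici,
      mem_union, mem_Iic]
    refine and_congr_right fun _ => forall_congr' fun w => ⟨fun h haw => ?_, fun h hw => ?_⟩
    · exact (le_total x w).imp id fun hwx => h ⟨haw, hwx⟩
    · exact (h hw.1).elim (fun hxw => le_antisymm hxw hw.2 ▸ le_rfl) id
  rw [this]
  exact isClosed_Icc.inter <| isClosed_biInter fun w _ =>
    isClosed_Iic.union (isClosed_le hS continuous_const)

lemma eq_of_mem_gapsIn_runningMinSet (hS : Continuous S) {u v : ℝ} {p : ℝ × ℝ}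
    (hp : p ∈ gapsIn (runningMinSet S a b) u v) : S p.1 = S p.2 := by
  obtain ⟨⟨hx, hxmin⟩, ⟨hy, hymin⟩, -, hxy, -, hgap⟩ := hp
  refine le_antisymm ?_ (hymin p.1 ⟨hx.1, hxy.le⟩)
  suffices Ioo p.1 p.2 ⊆ {z | S p.1 ≤ S z} from
    (isClosed_le continuous_const hS).closure_subset_iff.2 this
      (closure_Ioo hxy.ne ▸ right_mem_Icc.2 hxy.le)
  intro z hz
  -- a minimum point of `S` on `[p.1, z]` is a running-minimum time, hence is not in the gap
  obtain ⟨τ, hτ, hτmin⟩ := isCompact_Icc.exists_isMinOn (nonempty_Icc.2 hz.1.le) hS.continuousOn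
  have hτC : τ ∈ runningMinSet S a b := by
    refine ⟨⟨hx.1.trans hτ.1, hτ.2.trans (hz.2.le.trans hy.2)⟩, fun w hw => ?_⟩
    rcases le_total w p.1 with hwx | hxw
    · exact (hτmin ⟨le_rfl, hz.1.le⟩).trans (hxmin w ⟨hw.1, hwx⟩)
    · exact hτmin ⟨hxw, hw.2.trans hτ.2⟩
  have hτx : τ = p.1 := by
    refine le_antisymm (not_lt.1 fun h => ?_) hτ.1
    exact (hgap ▸ ⟨⟨h, hτ.2.trans_lt hz.2⟩, hτC⟩ : τ ∈ (∅ : Set ℝ))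
  exact hτx ▸ hτmin ⟨hz.1.le, le_rfl⟩

lemma deriv_nonpos_of_mem_runningMinSet {x s' : ℝ} (hx : x ∈ runningMinSet S a b) (hax : a < x)
    (hd : HasDerivAt S s' x) : s' ≤ 0 := by
  refine le_of_tendsto hd.tendsto_slope_zero_left ?_
  filter_upwards [Ioo_mem_nhdsLT (by linarith : a - x < 0)] with t ht
  rw [smul_eq_mul]
  exact mul_nonpos_of_nonpos_of_nonneg (inv_nonpos.2 ht.2.le)
    (sub_nonneg.2 (hx.2 _ ⟨by linarith [ht.1], by linarith [ht.2]⟩))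

end RunningMin

section Balanced

variable {s d : ℝ → ℝ} {a b : ℝ}

lemma intervalIntegral_nonpos_of_balanced_nonpos (hs : LocallyIntegrable s volume)
    (hd : LocallyIntegrable d volume) (hsd : ∀ x, 0 < d x → 0 < s x) (hab : a ≤ b)
    (hmin : ∀ t ∈ Icc a b, ∫ x in a..b, s x ≤ ∫ x in a..t, s x)
    (hbal : ∀ x y, a ≤ x → x < y → y ≤ b → ∫ t in x..y, s t = 0 → ∫ t in x..y, d t ≤ 0) :
    ∫ t in a..b, d t ≤ 0 := by
  set S : ℝ → ℝ := fun x => ∫ t in a..x, s t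
  have hSc : Continuous S := intervalIntegral.continuous_primitive hs.intervalIntegrable a
  set C := runningMinSet S a b
  have haC : a ∈ C := ⟨⟨le_rfl, hab⟩, fun w hw => le_antisymm hw.2 hw.1 ▸ le_rfl⟩
  have hbC : b ∈ C := ⟨⟨hab, le_rfl⟩, fun w hw => hmin w ⟨hw.1, hw.2⟩⟩
  have hgaps : ∫ t in Ioo a b \ C, d t ≤ 0 := by
    refine setIntegral_Ioo_sdiff_nonpos_of_gaps (isClosed_runningMinSet hSc) haC hbC
      (hd.integrableOn_isCompact isCompact_Icc |>.mono_set Ioo_subset_Icc_self) fun p hp => ?_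
    have hS : S p.1 = S p.2 := eq_of_mem_gapsIn_runningMinSet hSc hp
    rw [← integral_Ioc_eq_integral_Ioo, ← intervalIntegral.integral_of_le hp.2.2.2.1.le]
    refine hbal _ _ hp.2.2.1 hp.2.2.2.1 hp.2.2.2.2.1 ?_
    rw [← intervalIntegral.integral_interval_sub_left (hs.intervalIntegrable _ _)
      (hs.intervalIntegrable _ _)]
    exact sub_eq_zero.2 hS.symm
  -- on the running-minimum set the left difference quotients of `S` are `≤ 0`,
  -- so `s ≤ 0` there almost everywhere, and then `d ≤ 0` too
  have hcontact : ∫ t in Ioo a b ∩ C, d t ≤ 0 := by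
    refine setIntegral_nonpos_of_ae_restrict ?_
    rw [EventuallyLE, ae_restrict_iff' (measurableSet_Ioo.inter
      (isClosed_runningMinSet hSc).measurableSet)]
    filter_upwards [LocallyIntegrable.ae_hasDerivAt_integral hs] with x hx ⟨hxab, hxC⟩
    exact not_lt.1 fun h =>
      (deriv_nonpos_of_mem_runningMinSet hxC hxab.1 (hx a)).not_gt (hsd x h)
  rw [intervalIntegral.integral_of_le hab, integral_Ioc_eq_integral_Ioo,
    ← integral_inter_add_sdiff (isClosed_runningMinSet hSc).measurableSet
      (hd.integrableOn_isCompact isCompact_Icc |>.mono_set Ioo_subset_Icc_self)]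
  linarith

lemma exists_balanced_subinterval (hs : LocallyIntegrable s volume)
    (hd : LocallyIntegrable d volume) (hsd : ∀ x, 0 < d x → 0 < s x) (hab : a ≤ b)
    (hS : ∫ t in a..b, s t ≤ 0) (hD : 0 < ∫ t in a..b, d t) :
    ∃ x y, a ≤ x ∧ x < y ∧ y ≤ b ∧ ∫ t in x..y, s t = 0 ∧ 0 ≤ ∫ t in x..y, d t := by
  by_contra! hNO
  set S : ℝ → ℝ := fun x => ∫ t in a..x, s t
  have hSc : Continuous S := intervalIntegral.continuous_primitive hs.intervalIntegrable a
  set A := {t ∈ Icc a b | S t ≤ S b}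
  have hA : IsClosed A := isClosed_Icc.inter (isClosed_le hSc continuous_const)
  set x := sInf A
  have hxA : x ∈ A := (isCompact_Icc.of_isClosed_subset hA fun _ ht => ht.1).sInf_mem
    ⟨b, ⟨hab, le_rfl⟩, le_rfl⟩
  have hxmin : ∀ t ∈ A, x ≤ t := fun t ht => csInf_le (bddBelow_Icc.mono inter_subset_left) ht
  have hSx : S x = S b := by
    have hSa : S a = 0 := intervalIntegral.integral_same
    obtain ⟨t, ht, hSt⟩ := intermediate_value_Icc' hxA.1.1 hSc.continuousOn
      ⟨hxA.2, hSa ▸ hS⟩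
    rwa [le_antisymm ht.2 (hxmin t ⟨⟨ht.1, ht.2.trans hxA.1.2⟩, hSt.le⟩)] at hSt
  have hDx : ∫ t in a..x, d t ≤ 0 := by
    refine intervalIntegral_nonpos_of_balanced_nonpos hs hd hsd hxA.1.1 (fun t ht => ?_)
      fun u v hu huv hv h => (hNO u v hu huv (hv.trans hxA.1.2) h).le
    change S x ≤ S t
    rcases ht.2.lt_or_eq with htx | rfl
    · rw [hSx]
      exact (not_le.1 fun h => (hxmin t ⟨⟨ht.1, htx.le.trans hxA.1.2⟩, h⟩).not_gt htx).le
    · exact le_rfl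
  rcases hxA.1.2.lt_or_eq with hxb | hxb
  · have hbal : ∫ t in x..b, s t = 0 := by
      rw [← intervalIntegral.integral_interval_sub_left (hs.intervalIntegrable _ _)
        (hs.intervalIntegrable _ _)]
      exact sub_eq_zero.2 hSx.symm
    have := hNO x b hxA.1.1 hxb le_rfl hbal
    rw [← intervalIntegral.integral_add_adjacent_intervals (hd.intervalIntegrable a x)
      (hd.intervalIntegrable x b)] at hD
    linarith
  · exact (hxb ▸ hDx).not_gt hD

end Balanced

section ConvexEven

variable {Q : ℝ → ℝ}

lemma ConvexOn.le_of_abs_le_of_even (hQc : ConvexOn ℝ univ Q) (hQe : ∀ t, Q (-t) = Q t)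
    {u v : ℝ} (h : |u| ≤ |v|) : Q u ≤ Q v := by
  have hv : Q |v| = Q v := by rcases abs_choice v with h | h <;> simp [h, hQe]
  calc Q u ≤ max (Q (-|v|)) (Q |v|) :=
        hQc.le_max_of_mem_Icc (mem_univ _) (mem_univ _) (abs_le.1 h)
    _ = Q v := by rw [hQe, max_self, hv]

lemma ConvexOn.add_mul_leftDeriv_le (hQc : ConvexOn ℝ univ Q) (t y : ℝ) :
    Q t + (y - t) * derivWithin Q (Iio t) t ≤ Q y := by
  rcases lt_trichotomy y t with hyt | rfl | hty
  · have h := hQc.slope_le_leftDeriv_of_mem_interior (mem_univ y) (by simp) hyt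
    rw [slope_def_field, div_le_iff₀ (sub_pos.2 hyt)] at h
    linarith
  · simp
  · have h₁ := hQc.leftDeriv_le_rightDeriv_of_mem_interior (x := t) (by simp)
    have h₂ := hQc.rightDeriv_le_slope_of_mem_interior (by simp) (mem_univ y) hty
    rw [slope_def_field, le_div_iff₀ (sub_pos.2 hty)] at h₂
    nlinarith

lemma ConvexOn.monotone_leftDeriv (hQc : ConvexOn ℝ univ Q) :
    Monotone fun t => derivWithin Q (Iio t) t :=
  fun x y hxy => hQc.monotoneOn_leftDeriv (by simp) (by simp) hxy

lemma ConvexOn.leftDeriv_pos_of_lt (hQc : ConvexOn ℝ univ Q) (hQe : ∀ t, Q (-t) = Q t)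
    {ε u : ℝ} (hu : -ε ≤ u) (h : Q ε < Q u) : 0 < derivWithin Q (Iio u) u := by
  have hu₀ : 0 < u := by
    by_contra! hu₀
    refine (hQc.le_of_abs_le_of_even hQe ?_).not_gt h
    rw [abs_of_nonpos hu₀]
    exact (neg_le.1 hu).trans (le_abs_self ε)
  have hQ₀ : Q 0 < Q u := (hQc.le_of_abs_le_of_even hQe (by simp)).trans_lt h
  calc 0 < slope Q 0 u := by rw [slope_def_field]; exact div_pos (by linarith) (by linarith)
    _ ≤ _ := hQc.slope_le_leftDeriv_of_mem_interior (mem_univ 0) (by simp) hu₀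

end ConvexEven

section Congr

variable {Q φ ψ : ℝ → ℝ} {L : Set ℝ}

lemma Vc_congr (hL : MeasurableSet L) (h : EqOn φ ψ L) (c : ℝ) : Vc Q φ L c = Vc Q ψ L c := by
  unfold Vc avg
  exact congrArg _ (setLIntegral_congr_fun hL fun x hx => by simp only [h hx])

lemma CC_congr (hL : MeasurableSet L) (h : EqOn φ ψ L) : CC Q φ L = CC Q ψ L := by
  unfold CC
  simp_rw [Vc_congr hL h]

lemma W_congr (h : EqOn φ ψ L) : W Q φ L = W Q ψ L := by
  unfold W V
  refine iSup_congr fun x => iSup_congr fun y => iSup_congr fun hL => ?_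
  simp_rw [Vc_congr measurableSet_Icc (h.mono hL)]

end Congr

section Interval

variable {Q φ : ℝ → ℝ} {a b x y : ℝ}

lemma Vc_Icc_eq (hQ0 : ∀ t, 0 ≤ Q t) (hxy : x < y) {c : ℝ}
    (hint : IntervalIntegrable (fun t => Q (φ t - c)) volume x y) :
    Vc Q φ (Icc x y) c = ENNReal.ofReal ((∫ t in x..y, Q (φ t - c)) / (y - x)) := by
  rw [ENNReal.ofReal_div_of_pos (sub_pos.2 hxy), intervalIntegral.integral_of_le hxy.le,
    ← integral_Icc_eq_integral_Ioc, ofReal_integral_eq_lintegral_ofReal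
      ((intervalIntegrable_iff_integrableOn_Icc_of_le hxy.le).1 hint)
      (ae_of_all _ fun t => hQ0 _), ← Real.volume_Icc, ENNReal.div_eq_inv_mul]
  rfl

lemma V_le_W {J : Set ℝ} (h : Icc x y ⊆ J) : V Q φ (Icc x y) ≤ W Q φ J :=
  le_iSup₂_of_le x y (le_iSup_of_le h le_rfl)

lemma integral_comp_sub_CC_le (hQ0 : ∀ t, 0 ≤ Q t) (hab : a < b)
    (hint : ∀ c, IntervalIntegrable (fun t => Q (φ t - c)) volume a b)
    (hmin : ∃ c₀, ∀ c, ∫ t in a..b, Q (φ t - c₀) ≤ ∫ t in a..b, Q (φ t - c)) (c : ℝ) :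
    ∫ t in a..b, Q (φ t - CC Q φ (Icc a b)) ≤ ∫ t in a..b, Q (φ t - c) := by
  have hVc_le_iff : ∀ c c', Vc Q φ (Icc a b) c ≤ Vc Q φ (Icc a b) c' ↔
      ∫ t in a..b, Q (φ t - c) ≤ ∫ t in a..b, Q (φ t - c') := fun c c' => by
    rw [Vc_Icc_eq hQ0 hab (hint c), Vc_Icc_eq hQ0 hab (hint c'),
      ENNReal.ofReal_le_ofReal_iff (div_nonneg
        (intervalIntegral.integral_nonneg hab.le fun t _ => hQ0 _) (sub_pos.2 hab).le),
      div_le_div_iff_of_pos_right (sub_pos.2 hab)]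
  obtain ⟨c₀, hc₀⟩ := hmin
  exact (hVc_le_iff _ _).1 (Classical.epsilon_spec
    (p := fun c => ∀ c', Vc Q φ (Icc a b) c ≤ Vc Q φ (Icc a b) c')
    ⟨c₀, fun c' => (hVc_le_iff _ _).2 (hc₀ c')⟩ c)

end Interval

section Minimizer

variable {Q φ : ℝ → ℝ} {a b x y : ℝ}

lemma convexOn_integral_comp_sub (hQc : ConvexOn ℝ univ Q) (hab : a ≤ b)
    (hint : ∀ c, IntervalIntegrable (fun t => Q (φ t - c)) volume a b) :
    ConvexOn ℝ univ fun c => ∫ t in a..b, Q (φ t - c) := by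
  refine ⟨convex_univ, fun c₁ _ c₂ _ θ η hθ hη hθη => ?_⟩
  simp only [smul_eq_mul]
  rw [← intervalIntegral.integral_const_mul, ← intervalIntegral.integral_const_mul,
    ← intervalIntegral.integral_add ((hint c₁).const_mul θ) ((hint c₂).const_mul η)]
  refine intervalIntegral.integral_mono_on hab (hint _)
    (((hint c₁).const_mul θ).add ((hint c₂).const_mul η)) fun t _ => ?_
  have h := hQc.2 (mem_univ (φ t - c₁)) (mem_univ (φ t - c₂)) hθ hη hθη
  simp only [smul_eq_mul] at h
  calc Q (φ t - (θ * c₁ + η * c₂)) = Q (θ * (φ t - c₁) + η * (φ t - c₂)) := by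
        congr 1; linear_combination (-φ t) * hθη
    _ ≤ _ := h

lemma exists_forall_integral_comp_sub_le (hQc : ConvexOn ℝ univ Q) (hQe : ∀ t, Q (-t) = Q t)
    (hab : a ≤ b) {m M : ℝ} (hmM : m ≤ M) (hφ : ∀ t ∈ Icc a b, φ t ∈ Icc m M)
    (hint : ∀ c, IntervalIntegrable (fun t => Q (φ t - c)) volume a b) :
    ∃ c₀, ∀ c, ∫ t in a..b, Q (φ t - c₀) ≤ ∫ t in a..b, Q (φ t - c) := by
  have hcont : Continuous fun c => ∫ t in a..b, Q (φ t - c) :=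
    continuousOn_univ.1 ((convexOn_integral_comp_sub hQc hab hint).continuousOn isOpen_univ)
  obtain ⟨c₀, hc₀, hmin⟩ :=
    isCompact_Icc.exists_isMinOn (nonempty_Icc.2 hmM) hcont.continuousOn
  refine ⟨c₀, fun c => (hmin (projIcc m M hmM c).2).trans ?_⟩
  -- moving `c` to its projection onto `[m, M]` brings it closer to every value of `φ`
  refine intervalIntegral.integral_mono_on hab (hint _) (hint _) fun t ht => ?_
  refine hQc.le_of_abs_le_of_even hQe ?_
  have h := abs_projIcc_sub_projIcc hmM (c := φ t) (d := c)
  rwa [projIcc_of_mem hmM (hφ t ht)] at h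

lemma integral_add_mul_leftDeriv_le (hQc : ConvexOn ℝ univ Q) (hxy : x ≤ y) {ε c : ℝ}
    (hε : IntervalIntegrable (fun t => Q (φ t - ε)) volume x y)
    (hc : IntervalIntegrable (fun t => Q (φ t - c)) volume x y)
    (hs : IntervalIntegrable (fun t => derivWithin Q (Iio (φ t - ε)) (φ t - ε)) volume x y) :
    (∫ t in x..y, Q (φ t - ε)) + (ε - c) * ∫ t in x..y, derivWithin Q (Iio (φ t - ε)) (φ t - ε)
      ≤ ∫ t in x..y, Q (φ t - c) := by
  rw [← intervalIntegral.integral_const_mul, ← intervalIntegral.integral_add hε (hs.const_mul _)]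
  refine intervalIntegral.integral_mono_on hxy (hε.add (hs.const_mul _)) hc fun t _ => ?_
  convert hQc.add_mul_leftDeriv_le (φ t - ε) (φ t - c) using 2
  ring

end Minimizer

section Main

variable {Q φ : ℝ → ℝ} {a b x y : ℝ}

lemma locallyIntegrable_comp_sub (hQc : ConvexOn ℝ univ Q) (hQe : ∀ t, Q (-t) = Q t)
    (hQ0 : ∀ t, 0 ≤ Q t) {M : ℝ} (hφ : Measurable φ) (hφM : ∀ t, φ t ∈ Icc 0 M) (c : ℝ) :
    LocallyIntegrable (fun t => Q (φ t - c)) volume := by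
  have hQm : Measurable Q := (continuousOn_univ.1 (hQc.continuousOn isOpen_univ)).measurable
  refine locallyIntegrable_of_abs_le (B := Q (M + |c|)) (hQm.comp (hφ.sub_const c)) fun t => ?_
  rw [abs_of_nonneg (hQ0 _)]
  refine hQc.le_of_abs_le_of_even hQe ((abs_le.2 ⟨?_, ?_⟩).trans (le_abs_self (M + |c|))) <;>
    linarith [(hφM t).1, (hφM t).2, le_abs_self c, neg_abs_le c]

lemma locallyIntegrable_leftDeriv_comp_sub (hQc : ConvexOn ℝ univ Q) {M : ℝ} (hφ : Measurable φ)
    (hφM : ∀ t, φ t ∈ Icc 0 M) (ε : ℝ) :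
    LocallyIntegrable (fun t => derivWithin Q (Iio (φ t - ε)) (φ t - ε)) volume :=
  locallyIntegrable_of_abs_le (hQc.monotone_leftDeriv.measurable.comp (hφ.sub_const ε))
    fun t => abs_le_max_abs_abs (hQc.monotone_leftDeriv (by linarith [(hφM t).1] : -ε ≤ φ t - ε))
      (hQc.monotone_leftDeriv (by linarith [(hφM t).2] : φ t - ε ≤ M - ε))

lemma ofReal_le_V_of_balanced (hQc : ConvexOn ℝ univ Q) (hQ0 : ∀ t, 0 ≤ Q t) (hxy : x < y)
    {ε : ℝ} (hint : ∀ c, IntervalIntegrable (fun t => Q (φ t - c)) volume x y)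
    (hs : IntervalIntegrable (fun t => derivWithin Q (Iio (φ t - ε)) (φ t - ε)) volume x y)
    (hbal : ∫ t in x..y, derivWithin Q (Iio (φ t - ε)) (φ t - ε) = 0)
    (hd : 0 ≤ ∫ t in x..y, (Q (φ t - ε) - Q ε)) :
    ENNReal.ofReal (Q ε) ≤ V Q φ (Icc x y) := by
  refine le_iInf fun c => ?_
  rw [Vc_Icc_eq hQ0 hxy (hint c)]
  refine ENNReal.ofReal_le_ofReal ((le_div_iff₀ (sub_pos.2 hxy)).2 ?_)
  have h := integral_add_mul_leftDeriv_le hQc hxy.le (hint ε) (hint c) hs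
  rw [hbal, mul_zero, add_zero] at h
  rw [intervalIntegral.integral_sub (hint ε) intervalIntegrable_const,
    intervalIntegral.integral_const, smul_eq_mul] at hd
  linarith

theorem le_CC_or_Vc_le_of_W_lt (hQc : ConvexOn ℝ univ Q) (hQe : ∀ t, Q (-t) = Q t)
    (hQ0 : ∀ t, 0 ≤ Q t) {ε M : ℝ} (hφ : Measurable φ) (hφM : ∀ t, φ t ∈ Icc 0 M)
    (hab : a < b) (hW : W Q φ (Icc a b) < ENNReal.ofReal (Q ε)) :
    ε ≤ CC Q φ (Icc a b) ∨ Vc Q φ (Icc a b) ε ≤ ENNReal.ofReal (Q ε) := by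
  by_contra! h
  obtain ⟨hC, hV⟩ := h
  have hQint := locallyIntegrable_comp_sub hQc hQe hQ0 hφ hφM
  set s : ℝ → ℝ := fun t => derivWithin Q (Iio (φ t - ε)) (φ t - ε)
  set d : ℝ → ℝ := fun t => Q (φ t - ε) - Q ε
  have hs : LocallyIntegrable s volume := locallyIntegrable_leftDeriv_comp_sub hQc hφ hφM ε
  have hd : LocallyIntegrable d volume := (hQint ε).sub (locallyIntegrable_const _)
  have hsd (t : ℝ) (ht : 0 < d t) : 0 < s t :=
    hQc.leftDeriv_pos_of_lt hQe (by linarith [(hφM t).1]) (sub_pos.1 ht)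
  have hCC := integral_comp_sub_CC_le hQ0 hab (fun c => (hQint c).intervalIntegrable a b)
    (exists_forall_integral_comp_sub_le hQc hQe hab.le ((hφM a).1.trans (hφM a).2)
      (fun t _ => hφM t) fun c => (hQint c).intervalIntegrable a b)
  -- `CC < ε` minimizes, so the subgradient inequality forces `∫ s ≤ 0`
  have hS : ∫ t in a..b, s t ≤ 0 := by
    have h := integral_add_mul_leftDeriv_le hQc hab.le ((hQint ε).intervalIntegrable a b)
      ((hQint (CC Q φ (Icc a b))).intervalIntegrable a b) (hs.intervalIntegrable a b)
    nlinarith [hCC ε]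
  have hD : 0 < ∫ t in a..b, d t := by
    rw [Vc_Icc_eq hQ0 hab ((hQint ε).intervalIntegrable a b), ENNReal.ofReal_lt_ofReal_iff',
      lt_div_iff₀ (sub_pos.2 hab)] at hV
    rw [intervalIntegral.integral_sub ((hQint ε).intervalIntegrable a b) intervalIntegrable_const,
      intervalIntegral.integral_const, smul_eq_mul]
    linarith [hV.1]
  obtain ⟨x, y, hax, hxy, hyb, hbal, hxyd⟩ :=
    exists_balanced_subinterval hs hd hsd hab.le hS hD
  exact (hW.trans_le ((ofReal_le_V_of_balanced hQc hQ0 hxy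
    (fun c => (hQint c).intervalIntegrable x y) (hs.intervalIntegrable x y) hbal hxyd).trans
    (V_le_W (Icc_subset_Icc hax hyb)))).false

end Main

theorem stmt9_general (Q : ℝ → ℝ) (hQ : StrictConvexOn ℝ univ Q) (hQe : ∀ t, Q (-t) = Q t)
    (hQ0 : ∀ t, 0 ≤ Q t) (ε : ℝ)
    (φ : ℝ → ℝ) (hφ : Measurable φ) (a b : ℝ) (hab : a < b)
    (hnn : ∀ x ∈ Icc a b, 0 ≤ φ x) (M : ℝ) (hbd : ∀ x ∈ Icc a b, φ x ≤ M)
    (hW : W Q φ (Icc a b) < ENNReal.ofReal (Q ε)) :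
    ε ≤ CC Q φ (Icc a b) ∨ Vc Q φ (Icc a b) ε ≤ ENNReal.ofReal (Q ε) := by
  -- only the values of `φ` on `[a, b]` matter, so `φ` may be clipped to `[0, M]`
  set ψ : ℝ → ℝ := fun x => max 0 (min M (φ x))
  have hφψ : EqOn φ ψ (Icc a b) := fun x hx => by simp [ψ, hnn x hx, hbd x hx]
  have hM : 0 ≤ M := (hnn a ⟨le_rfl, hab.le⟩).trans (hbd a ⟨le_rfl, hab.le⟩)
  rw [W_congr hφψ] at hW
  rw [CC_congr measurableSet_Icc hφψ, Vc_congr measurableSet_Icc hφψ]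
  exact le_CC_or_Vc_le_of_W_lt hQ.convexOn hQe hQ0 (measurable_const.max (measurable_const.min hφ))
    (fun x => ⟨le_max_left _ _, max_le hM (min_le_left _ _)⟩) hab hW

theorem stmt9 (Q : ℝ → ℝ) (hQ : StrictConvexOn ℝ univ Q) (hQe : ∀ t, Q (-t) = Q t)
    (hQ0 : ∀ t, 0 ≤ Q t) (ε : ℝ) (hε : 0 < ε)
    (φ : ℝ → ℝ) (hφ : Measurable φ) (a b : ℝ) (hab : a < b)
    (hnn : ∀ x ∈ Icc a b, 0 ≤ φ x) (M : ℝ) (hbd : ∀ x ∈ Icc a b, φ x ≤ M)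
    (hW : W Q φ (Icc a b) < ENNReal.ofReal (Q ε)) :
    ε ≤ CC Q φ (Icc a b) ∨ Vc Q φ (Icc a b) ε ≤ ENNReal.ofReal (Q ε) :=
  stmt9_general Q hQ hQe hQ0 ε φ hφ a b hab hnn M hbd hW
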